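/- arXiv:1610.02319 — 3 statements merged into one kernel-verified Lean document; each statement's English description precedes it below -/
import Mathlib

section
/- Let m ≥ 2 and let z₁, …, z_{2m} ∈ ℝ² be the sequentially enumerated vertices zⱼ = r₀(cos(π(j-1)/m), sin(π(j-1)/m)) with r₀ > 0 of a regular 2m-gon. Define α = -∑_{k=2}^{2m} (-1)ᵏ / (4π |z_k - z₁|). Then α ≠ 0; in fact α < 0. -/
/-!
The chord from `z 1` to `z k` has length `2 r₀ sin (π (k - 1) / (2 m))`, so `-α` is a positive
multiple of `∑_{j < 2m - 1} (-1)^j / sin (π (j + 1) / (2 m))`. The terms at `j` and `2m - 2 - j`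
coincide, sign included, so the sum folds into `∑_{j < m - 1} + ∑_{j < m}` of the same terms.
On `j ≤ m - 1` the angle stays in `(0, π/2]`, so `1 / sin` decreases strictly there, and the
Leibniz criterion makes the first alternating sum nonnegative and the second positive.
-/

open Real Finset

noncomputable def pt2 (a b : ℝ) : EuclideanSpace ℝ (Fin 2) :=
  (WithLp.equiv 2 (Fin 2 → ℝ)).symm ![a, b]

theorem norm_pt2_sub (a b c d : ℝ) :
    ‖pt2 a b - pt2 c d‖ = √((a - c) ^ 2 + (b - d) ^ 2) := by
  simp [pt2, EuclideanSpace.norm_eq, Fin.sum_univ_two, sq_abs]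

theorem norm_pt2_polar_sub {r : ℝ} (hr : 0 ≤ r) (θ φ : ℝ) :
    ‖pt2 (r * cos θ) (r * sin θ) - pt2 (r * cos φ) (r * sin φ)‖ =
      2 * r * |sin ((θ - φ) / 2)| := by
  obtain ⟨ψ, rfl⟩ : ∃ ψ, θ = φ + 2 * ψ := ⟨(θ - φ) / 2, by ring⟩
  have hψ : (φ + 2 * ψ - φ) / 2 = ψ := by ring
  rw [norm_pt2_sub, hψ, cos_add, sin_add, cos_two_mul, sin_two_mul]
  have hsq :
      (r * (cos φ * (2 * cos ψ ^ 2 - 1) - sin φ * (2 * sin ψ * cos ψ)) - r * cos φ) ^ 2 +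
      (r * (sin φ * (2 * cos ψ ^ 2 - 1) + cos φ * (2 * sin ψ * cos ψ)) - r * sin φ) ^ 2 =
      (2 * r * sin ψ) ^ 2 := by
    linear_combination
      r ^ 2 * ((2 * cos ψ ^ 2 - 2) ^ 2 + 4 * sin ψ ^ 2 * cos ψ ^ 2) * sin_sq_add_cos_sq φ +
        4 * r ^ 2 * (cos ψ ^ 2 - 1) * sin_sq_add_cos_sq ψ
  rw [hsq, sqrt_sq_eq_abs, abs_mul, abs_of_nonneg (by positivity : 0 ≤ 2 * r)]

theorem sum_range_two_mul_add_one_of_symm {M : Type*} [AddCommMonoid M] (f : ℕ → M) (n : ℕ)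
    (hf : ∀ j ≤ n, f (2 * n - j) = f j) :
    ∑ j ∈ range (2 * n + 1), f j = ∑ j ∈ range n, f j + ∑ j ∈ range (n + 1), f j := by
  rw [show 2 * n + 1 = n + (n + 1) by ring, sum_range_add,
    ← sum_range_reflect (fun j => f (n + j))]
  congr 1
  refine sum_congr rfl fun j hj => ?_
  have hjn : j ≤ n := Nat.lt_succ_iff.mp (mem_range.mp hj)
  rw [← hf j hjn]
  congr 1
  omega

theorem sum_range_neg_one_pow_mul_pos {R : Type*} [CommRing R] [LinearOrder R]
    [IsStrictOrderedRing R] {g : ℕ → R} {n : ℕ} (hg : StrictAntiOn g (Set.Iic n))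
    (hn : 0 < g n) :
    0 < ∑ j ∈ range (n + 1), (-1) ^ j * g j := by
  induction n using Nat.twoStepInduction generalizing g with
  | zero => simpa using hn
  | one =>
    have h10 : g 1 < g 0 := hg (by simp) (by simp) zero_lt_one
    simp only [sum_range_succ, range_zero, sum_empty, pow_zero, pow_one, one_mul, neg_one_mul]
    linarith
  | more n ih _ =>
    have hshift : StrictAntiOn (fun j => g (j + 2)) (Set.Iic n) := fun a ha b hb hab =>
      hg (by simp_all) (by simp_all) (by omega)
    have h10 : g 1 < g 0 := hg (by simp) (by simp) zero_lt_one
    rw [sum_range_succ', sum_range_succ']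
    have := ih hshift hn
    simp only [zero_add, pow_zero, one_mul, neg_one_mul, pow_succ, mul_neg, mul_one,
      neg_neg]
      at this ⊢
    linarith

theorem sum_range_neg_one_pow_div_sin_pos (n : ℕ) :
    0 < ∑ j ∈ range (2 * n + 1), (-1 : ℝ) ^ j / sin (π * ((j : ℝ) + 1) / (2 * n + 2)) := by
  set θ : ℕ → ℝ := fun j => π * ((j : ℝ) + 1) / (2 * n + 2) with hθ
  have hθ_mem : ∀ j ≤ n, 0 < θ j ∧ θ j ≤ π / 2 := by
    intro j hj
    have hj' : (j : ℝ) ≤ n := by exact_mod_cast hj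
    refine ⟨by positivity, ?_⟩
    rw [hθ, div_le_iff₀ (by positivity)]
    nlinarith [pi_pos]
  have hanti : StrictAntiOn (fun j => (sin (θ j))⁻¹) (Set.Iic n) := by
    intro a ha b hb hab
    have hθa := hθ_mem a ha
    have hθb := hθ_mem b hb
    have hθab : θ a < θ b := by
      have : (a : ℝ) < b := by exact_mod_cast hab
      simp only [hθ]
      gcongr
    refine (inv_lt_inv₀ (sin_pos_of_pos_of_lt_pi hθb.1 (by linarith))
      (sin_pos_of_pos_of_lt_pi hθa.1 (by linarith))).2 ?_
    exact sin_lt_sin_of_lt_of_le_pi_div_two (by linarith) hθb.2 hθab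
  have hsymm : ∀ j ≤ n, (-1 : ℝ) ^ (2 * n - j) * (sin (θ (2 * n - j)))⁻¹ =
      (-1) ^ j * (sin (θ j))⁻¹ := by
    intro j hj
    have hθ_refl : θ (2 * n - j) = π - θ j := by
      simp only [hθ, Nat.cast_sub (by omega : j ≤ 2 * n)]
      push_cast
      field_simp
      ring
    rw [hθ_refl, sin_pi_sub, show 2 * n - j = j + 2 * (n - j) by omega, pow_add, pow_mul,
      neg_one_sq, one_pow, mul_one]
  simp only [div_eq_mul_inv]
  rw [sum_range_two_mul_add_one_of_symm _ n hsymm]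
  have hpos : 0 < (sin (θ n))⁻¹ := inv_pos.2 (sin_pos_of_pos_of_lt_pi (hθ_mem n le_rfl).1
    (by linarith [(hθ_mem n le_rfl).2, pi_pos]))
  have hhead : 0 ≤ ∑ j ∈ range n, (-1 : ℝ) ^ j * (sin (θ j))⁻¹ := by
    rcases n with _ | n
    · simp
    · exact (sum_range_neg_one_pow_mul_pos (hanti.mono (Set.Iic_subset_Iic.2 n.le_succ))
        (hpos.trans (hanti (by simp) (by simp) n.lt_succ_self))).le
  exact add_pos_of_nonneg_of_pos hhead (sum_range_neg_one_pow_mul_pos hanti hpos)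

/-- for the regular 2m-gon, the contact parameter
α = -∑_{k=2}^{2m} (-1)ᵏ/(4π|z_k - z₁|) is nonzero; in fact negative.
Here z : ℕ → ℝ², z k = r₀(cos(π(k-1)/m), sin(π(k-1)/m)). -/
theorem stmt7 (m : ℕ) (hm : 2 ≤ m) (r₀ : ℝ) (hr : 0 < r₀)
    (z : ℕ → EuclideanSpace ℝ (Fin 2))
    (hz : ∀ k : ℕ, z k = pt2 (r₀ * cos (π * ((k : ℝ) - 1) / m))
                         (r₀ * sin (π * ((k : ℝ) - 1) / m)))
    (α : ℝ)
    (hα : α = -∑ k ∈ Finset.Icc 2 (2 * m), ((-1 : ℝ)) ^ k / (4 * π * ‖z k - z 1‖)) :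
    α ≠ 0 ∧ α < 0 := by
  obtain ⟨n, rfl⟩ : ∃ n, m = n + 1 := ⟨m - 1, by omega⟩
  have hdist : ∀ j < 2 * n + 1,
      ‖z (j + 2) - z 1‖ = 2 * r₀ * sin (π * ((j : ℝ) + 1) / (2 * n + 2)) := by
    intro j hj
    have hj' : (j : ℝ) + 1 < 2 * n + 2 := by exact_mod_cast (by omega : j + 1 < 2 * n + 2)
    have hangle : (π * (((j + 2 : ℕ) : ℝ) - 1) / (n + 1 : ℕ) -
        π * (((1 : ℕ) : ℝ) - 1) / (n + 1 : ℕ)) / 2 = π * ((j : ℝ) + 1) / (2 * n + 2) := by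
      push_cast
      field_simp
      ring
    rw [hz, hz, norm_pt2_polar_sub hr.le, hangle, abs_of_pos]
    refine sin_pos_of_pos_of_lt_pi (by positivity) ?_
    rw [div_lt_iff₀ (by positivity)]
    nlinarith [pi_pos]
  have hsum : ∑ k ∈ Icc 2 (2 * (n + 1)), (-1 : ℝ) ^ k / (4 * π * ‖z k - z 1‖) =
      (8 * π * r₀)⁻¹ *
        ∑ j ∈ range (2 * n + 1), (-1 : ℝ) ^ j / sin (π * ((j : ℝ) + 1) / (2 * n + 2)) := by
    rw [← Ico_add_one_right_eq_Icc, sum_Ico_eq_sum_range, mul_sum]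
    refine sum_congr rfl fun j hj => ?_
    rw [add_comm 2 j, hdist j (mem_range.1 hj), pow_add, neg_one_sq, mul_one]
    field_simp
    ring
  have hneg : α < 0 := by
    rw [hα, hsum, neg_lt_zero]
    exact mul_pos (by positivity) (sum_range_neg_one_pow_div_sin_pos n)
  exact ⟨hneg.ne, hneg⟩
end

section
/- Let n = 2, z₁ ≠ z₂ ∈ ℝ³, s = |z₁ - z₂|, and α₁ = α₂ = -1/(4πs). Then the function ψ(x) = -(1/(4π))(1/|x - z₁| - 1/|x - z₂|) is a nonzero element of L²(ℝ³), harmonic on ℝ³ \ {z₁, z₂}, with asymptotics ψ(x) = O(1/|x|²) at infinity, and near each zⱼ satisfies ψ(x) = ψ_{j,-1}/|x - zⱼ| + ψ_{j,0} + O(|x - zⱼ|) with ψ_{j,0} = 4π αⱼ ψ_{j,-1}. -/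
open Real MeasureTheory

noncomputable def laplacian3 (f : EuclideanSpace ℝ (Fin 3) → ℝ)
    (x : EuclideanSpace ℝ (Fin 3)) : ℝ :=
  ∑ i : Fin 3, iteratedFDeriv ℝ 2 f x ![EuclideanSpace.single i 1, EuclideanSpace.single i 1]

/-!
ψ is `-(4π)⁻¹` times the dipole potential `‖x - z₁‖⁻¹ - ‖x - z₂‖⁻¹`.
Harmonicity comes from `Δ ‖x‖ ^ p = p (p + n - 2) ‖x‖ ^ (p - 2)`, which vanishes for `p = -1`
in dimension `n = 3`. The estimate `|‖a‖⁻¹ - ‖b‖⁻¹| ≤ ‖a - b‖ / (‖a‖ ‖b‖)` gives both the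
decay `O(‖x‖⁻²)` at infinity (with `a - b = z₂ - z₁`) and the contact condition at `z₁`
(with `a = x - z₂`, `b = z₁ - z₂`). The square of the dipole potential is locally integrable
because `‖x‖⁻²` is in dimension 3, and it is `O((1 + ‖x‖)⁻⁴)` at infinity, hence integrable.
-/

open Filter Topology Asymptotics InnerProductSpace Laplacian
open scoped RealInnerProductSpace

section Normed

variable {E : Type*} [NormedAddCommGroup E]

theorem abs_inv_norm_sub_inv_norm_le {a b : E} (ha : a ≠ 0) (hb : b ≠ 0) :
    |‖a‖⁻¹ - ‖b‖⁻¹| ≤ ‖a - b‖ / (‖a‖ * ‖b‖) := by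
  have hab : 0 < ‖a‖ * ‖b‖ := mul_pos (norm_pos_iff.2 ha) (norm_pos_iff.2 hb)
  rw [inv_sub_inv (norm_ne_zero_iff.2 ha) (norm_ne_zero_iff.2 hb), abs_div, abs_of_pos hab]
  exact div_le_div_of_nonneg_right ((abs_norm_sub_norm_le b a).trans_eq (norm_sub_rev b a)) hab.le

noncomputable def dipolePotential (z₁ z₂ x : E) : ℝ := ‖x - z₁‖⁻¹ - ‖x - z₂‖⁻¹

theorem dipolePotential_swap (z₁ z₂ x : E) :
    dipolePotential z₂ z₁ x = -dipolePotential z₁ z₂ x :=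
  (neg_sub _ _).symm

theorem dipolePotential_two_smul_sub [NormedSpace ℝ E] (z₁ z₂ : E) :
    dipolePotential z₁ z₂ ((2 : ℝ) • z₁ - z₂) = (2 * ‖z₁ - z₂‖)⁻¹ := by
  rw [dipolePotential, show (2 : ℝ) • z₁ - z₂ - z₁ = z₁ - z₂ by module,
    show (2 : ℝ) • z₁ - z₂ - z₂ = (2 : ℝ) • (z₁ - z₂) by module, norm_smul, Real.norm_two,
    mul_inv]
  ring

variable {z₁ z₂ x : E}

theorem abs_dipolePotential_le (h₁ : 2 * ‖z₁‖ < ‖x‖) (h₂ : 2 * ‖z₂‖ < ‖x‖) :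
    |dipolePotential z₁ z₂ x| ≤ 4 * ‖z₁ - z₂‖ / ‖x‖ ^ 2 := by
  have hx₁ : ‖x‖ / 2 < ‖x - z₁‖ := by linarith [norm_sub_norm_le x z₁]
  have hx₂ : ‖x‖ / 2 < ‖x - z₂‖ := by linarith [norm_sub_norm_le x z₂]
  have hx : 0 < ‖x‖ := by linarith [norm_nonneg z₁]
  calc |dipolePotential z₁ z₂ x|
      ≤ ‖(x - z₁) - (x - z₂)‖ / (‖x - z₁‖ * ‖x - z₂‖) :=
        abs_inv_norm_sub_inv_norm_le (norm_pos_iff.1 (by linarith)) (norm_pos_iff.1 (by linarith))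
    _ ≤ ‖z₁ - z₂‖ / ((‖x‖ / 2) * (‖x‖ / 2)) := by
        rw [sub_sub_sub_cancel_left, norm_sub_rev]
        gcongr
    _ = 4 * ‖z₁ - z₂‖ / ‖x‖ ^ 2 := by ring

theorem abs_dipolePotential_sub_le (hx : ‖x - z₁‖ < ‖z₁ - z₂‖ / 2) :
    |dipolePotential z₁ z₂ x - (‖x - z₁‖⁻¹ - ‖z₁ - z₂‖⁻¹)| ≤ 2 / ‖z₁ - z₂‖ ^ 2 * ‖x - z₁‖ := by
  have hs : 0 < ‖z₁ - z₂‖ := by linarith [norm_nonneg (x - z₁)]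
  have hx₂ : ‖z₁ - z₂‖ / 2 < ‖x - z₂‖ := by
    linarith [norm_sub_le_norm_sub_add_norm_sub z₁ x z₂, norm_sub_rev z₁ x]
  have hrw : dipolePotential z₁ z₂ x - (‖x - z₁‖⁻¹ - ‖z₁ - z₂‖⁻¹) =
      ‖z₁ - z₂‖⁻¹ - ‖x - z₂‖⁻¹ := by
    unfold dipolePotential
    ring
  calc |dipolePotential z₁ z₂ x - (‖x - z₁‖⁻¹ - ‖z₁ - z₂‖⁻¹)|
      ≤ ‖(z₁ - z₂) - (x - z₂)‖ / (‖z₁ - z₂‖ * ‖x - z₂‖) := by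
        rw [hrw]
        exact abs_inv_norm_sub_inv_norm_le (norm_pos_iff.1 hs) (norm_pos_iff.1 (by linarith))
    _ ≤ ‖x - z₁‖ / (‖z₁ - z₂‖ * (‖z₁ - z₂‖ / 2)) := by
        rw [sub_sub_sub_cancel_right, norm_sub_rev]
        gcongr
    _ = 2 / ‖z₁ - z₂‖ ^ 2 * ‖x - z₁‖ := by field_simp

theorem dipolePotential_sq_isBigO_cocompact [ProperSpace E] :
    (fun x ↦ dipolePotential z₁ z₂ x ^ 2) =O[cocompact E] fun x ↦ (1 + ‖x‖) ^ (-4 : ℝ) := by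
  set C := 4 * ‖z₁ - z₂‖
  refine IsBigO.of_bound (16 * C ^ 2) ?_
  filter_upwards [tendsto_norm_cocompact_atTop.eventually_gt_atTop (2 * ‖z₁‖ + 2 * ‖z₂‖ + 1)]
    with x hx
  have hd := abs_dipolePotential_le (z₁ := z₁) (z₂ := z₂)
    (by linarith [norm_nonneg z₂]) (by linarith [norm_nonneg z₁])
  have hx1 : 1 ≤ ‖x‖ := by linarith [norm_nonneg z₁, norm_nonneg z₂]
  rw [norm_pow, Real.norm_eq_abs, Real.norm_of_nonneg (by positivity),
    rpow_neg (by positivity), show (4 : ℝ) = (4 : ℕ) by norm_num, rpow_natCast]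
  calc |dipolePotential z₁ z₂ x| ^ 2 ≤ (C / ‖x‖ ^ 2) ^ 2 := by gcongr
    _ = 16 * C ^ 2 / (2 * ‖x‖) ^ 4 := by ring
    _ ≤ 16 * C ^ 2 / (1 + ‖x‖) ^ 4 := by gcongr; linarith
    _ = 16 * C ^ 2 * ((1 + ‖x‖) ^ 4)⁻¹ := div_eq_mul_inv _ _

variable [MeasurableSpace E] [BorelSpace E]

theorem measurable_dipolePotential : Measurable (dipolePotential z₁ z₂) := by
  unfold dipolePotential
  fun_prop

theorem MeasureTheory.LocallyIntegrable.comp_sub_right {F : Type*} [NormedAddCommGroup F]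
    {μ : Measure E} [μ.IsAddRightInvariant] {f : E → F} (hf : LocallyIntegrable f μ) (z : E) :
    LocallyIntegrable (fun x ↦ f (x - z)) μ :=
  (locallyIntegrable_map_homeomorph (Homeomorph.subRight z)).1
    (by rwa [Homeomorph.coe_subRight, (measurePreserving_sub_right μ z).map_eq])

variable [NormedSpace ℝ E] [FiniteDimensional ℝ E] (μ : Measure E) [μ.IsAddHaarMeasure]

theorem locallyIntegrable_inv_norm_sub_sq (hE : 2 < Module.finrank ℝ E) (z : E) :
    LocallyIntegrable (fun x ↦ ‖x - z‖⁻¹ ^ 2) μ := by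
  refine LocallyIntegrable.comp_sub_right (f := fun x ↦ ‖x‖⁻¹ ^ 2) ?_ z
  refine locallyIntegrable_of_norm_le_rpow (C := 1) (α := 2) (by omega) (by exact_mod_cast hE)
    (Eventually.of_forall fun x ↦ ?_) (by fun_prop)
  rw [one_mul, Real.norm_of_nonneg (by positivity), rpow_neg (norm_nonneg x), inv_pow]
  norm_cast

theorem memLp_dipolePotential (hE : Module.finrank ℝ E = 3) :
    MemLp (dipolePotential z₁ z₂) 2 μ := by
  refine (memLp_two_iff_integrable_sq measurable_dipolePotential.aestronglyMeasurable).2 ?_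
  have hsing := ((locallyIntegrable_inv_norm_sub_sq μ (by omega) z₁).add
    (locallyIntegrable_inv_norm_sub_sq μ (by omega) z₂)).smul (2 : ℝ)
  have hloc : LocallyIntegrable (fun x ↦ dipolePotential z₁ z₂ x ^ 2) μ := by
    refine hsing.mono (measurable_dipolePotential.pow_const 2).aestronglyMeasurable
      (Eventually.of_forall fun x ↦ ?_)
    simp only [dipolePotential, Pi.smul_apply, Pi.add_apply, smul_eq_mul, norm_pow,
      Real.norm_eq_abs]
    rw [sq_abs, abs_of_nonneg (by positivity)]
    nlinarith [sq_nonneg (‖x - z₁‖⁻¹ + ‖x - z₂‖⁻¹)]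
  exact hloc.integrable_of_isBigO_cocompact dipolePotential_sq_isBigO_cocompact
    ((integrable_one_add_norm (by rw [hE]; norm_num)).integrableAtFilter _)

end Normed

section InnerProduct

variable {E : Type*} [NormedAddCommGroup E] [InnerProductSpace ℝ E]

theorem hasFDerivAt_norm_rpow_of_ne_zero (p : ℝ) {x : E} (hx : x ≠ 0) :
    HasFDerivAt (fun y : E ↦ ‖y‖ ^ p) ((p * ‖x‖ ^ (p - 2)) • innerSL ℝ x) x := by
  have hsq (y : E) (q : ℝ) : (‖y‖ ^ 2) ^ (q / 2) = ‖y‖ ^ q := by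
    rw [← rpow_natCast, ← rpow_mul (norm_nonneg y)]
    ring_nf
  have h := (hasStrictFDerivAt_norm_sq x).hasFDerivAt.rpow_const (p := p / 2)
    (Or.inl (pow_ne_zero 2 (norm_ne_zero_iff.2 hx)))
  simp only [hsq, show p / 2 - 1 = (p - 2) / 2 by ring] at h
  convert h using 1
  rw [← Nat.cast_smul_eq_nsmul ℝ, smul_smul]
  ring_nf

theorem laplacian_norm_rpow [FiniteDimensional ℝ E] (p : ℝ) {x : E} (hx : x ≠ 0) :
    Δ (fun y : E ↦ ‖y‖ ^ p) x = p * (p + Module.finrank ℝ E - 2) * ‖x‖ ^ (p - 2) := by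
  have hfderiv : fderiv ℝ (fun y : E ↦ ‖y‖ ^ p) =ᶠ[𝓝 x]
      fun y ↦ (p * ‖y‖ ^ (p - 2)) • innerSL ℝ y := by
    filter_upwards [isOpen_ne.mem_nhds hx] with y hy
    exact (hasFDerivAt_norm_rpow_of_ne_zero p hy).fderiv
  -- `innerSL ℝ` is typed as conjugate-linear; the ascription exposes it as a linear map.
  have hhess := ((hasFDerivAt_norm_rpow_of_ne_zero (p - 2) hx).const_mul p).fun_smul
    (innerSL ℝ : E →L[ℝ] E →L[ℝ] ℝ).hasFDerivAt
  have hinner (u v : E) : (innerSL ℝ : E →L[ℝ] E →L[ℝ] ℝ) u v = ⟪u, v⟫_ℝ := rfl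
  have hpow : ‖x‖ ^ (p - 2 - 2) * ‖x‖ ^ 2 = ‖x‖ ^ (p - 2) := by
    rw [← rpow_natCast, ← rpow_add (norm_pos_iff.2 hx)]
    norm_num
  rw [laplacian_eq_iteratedFDeriv_stdOrthonormalBasis]
  simp only [iteratedFDeriv_two_apply, hfderiv.fderiv_eq, hhess.fderiv, Fin.isValue,
    Matrix.cons_val_zero, Matrix.cons_val_one, Matrix.cons_val_fin_one, add_apply, smul_apply,
    ContinuousLinearMap.smulRight_apply, smul_eq_mul, hinner, OrthonormalBasis.inner_eq_one]
  calc _ = ∑ i, (p * ‖x‖ ^ (p - 2) + p * (p - 2) * ‖x‖ ^ (p - 2 - 2) *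
        ⟪x, stdOrthonormalBasis ℝ E i⟫_ℝ ^ 2) := by
        congr! 1 with i
        ring
    _ = _ := by
        rw [Finset.sum_add_distrib, ← Finset.mul_sum (s := Finset.univ) (a := p * (p - 2) * _),
          (stdOrthonormalBasis ℝ E).sum_sq_inner_left, Finset.sum_const, Finset.card_univ,
          Fintype.card_fin, nsmul_eq_mul, mul_assoc _ _ (‖x‖ ^ 2), hpow]
        ring

theorem laplacian_comp_sub [FiniteDimensional ℝ E] (f : E → ℝ) (z x : E) :
    Δ (fun y ↦ f (y - z)) x = Δ f (x - z) := by
  simp [laplacian_eq_iteratedFDeriv_stdOrthonormalBasis, iteratedFDeriv_comp_sub]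

variable {z z₁ z₂ x : E}

theorem laplacian_inv_norm_sub [FiniteDimensional ℝ E] (hE : Module.finrank ℝ E = 3)
    (hx : x ≠ z) : Δ (fun y : E ↦ ‖y - z‖⁻¹) x = 0 := by
  have h : (fun y : E ↦ ‖y - z‖⁻¹) = fun y ↦ (fun w : E ↦ ‖w‖ ^ (-1 : ℝ)) (y - z) := by
    simp [rpow_neg_one]
  rw [h, laplacian_comp_sub (fun w : E ↦ ‖w‖ ^ (-1 : ℝ)),
    laplacian_norm_rpow _ (sub_ne_zero.2 hx), hE]
  norm_num

theorem contDiffAt_inv_norm_sub {n : WithTop ℕ∞} (hx : x ≠ z) :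
    ContDiffAt ℝ n (fun y : E ↦ ‖y - z‖⁻¹) x :=
  ((contDiffAt_id.sub contDiffAt_const).norm ℝ (sub_ne_zero.2 hx)).inv
    (norm_ne_zero_iff.2 (sub_ne_zero.2 hx))

theorem contDiffAt_dipolePotential {n : WithTop ℕ∞} (hx₁ : x ≠ z₁) (hx₂ : x ≠ z₂) :
    ContDiffAt ℝ n (dipolePotential z₁ z₂) x :=
  (contDiffAt_inv_norm_sub hx₁).sub (contDiffAt_inv_norm_sub hx₂)

theorem laplacian_dipolePotential [FiniteDimensional ℝ E] (hE : Module.finrank ℝ E = 3)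
    (hx₁ : x ≠ z₁) (hx₂ : x ≠ z₂) : Δ (dipolePotential z₁ z₂) x = 0 := by
  rw [show dipolePotential z₁ z₂ = (fun y ↦ ‖y - z₁‖⁻¹) - fun y ↦ ‖y - z₂‖⁻¹ from rfl,
    (contDiffAt_inv_norm_sub hx₁).laplacian_sub (contDiffAt_inv_norm_sub hx₂),
    laplacian_inv_norm_sub hE hx₁, laplacian_inv_norm_sub hE hx₂, sub_zero]

end InnerProduct

theorem laplacian3_eq_laplacian (f : EuclideanSpace ℝ (Fin 3) → ℝ) : laplacian3 f = Δ f := by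
  rw [laplacian_eq_iteratedFDeriv_orthonormalBasis f (EuclideanSpace.basisFun (Fin 3) ℝ)]
  funext x
  simp [laplacian3]

/-- the two-point scatterer with α₁ = α₂ = -1/(4πs), s = |z₁-z₂|, has the
zero-energy bound state ψ(x) = -(1/(4π))(1/|x-z₁| - 1/|x-z₂|): it is a nonzero L²
function, harmonic off {z₁, z₂}, O(1/|x|²) at infinity, and near zⱼ satisfies the
contact condition with ψ_{1,-1} = -1/(4π), ψ_{2,-1} = 1/(4π), ψ_{j,0} = 4παψ_{j,-1}. -/
theorem stmt18 (z₁ z₂ : EuclideanSpace ℝ (Fin 3)) (hz : z₁ ≠ z₂)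
    (s : ℝ) (hs : s = ‖z₁ - z₂‖) (α : ℝ) (hα : α = -1 / (4 * π * s))
    (ψ : EuclideanSpace ℝ (Fin 3) → ℝ)
    (hψ : ∀ x, ψ x = -(1 / (4 * π)) * (1 / ‖x - z₁‖ - 1 / ‖x - z₂‖)) :
    (∃ x, ψ x ≠ 0) ∧
    MemLp ψ 2 (volume : Measure (EuclideanSpace ℝ (Fin 3))) ∧
    (ContDiffOn ℝ 2 ψ {x | x ≠ z₁ ∧ x ≠ z₂} ∧
      ∀ x, x ≠ z₁ → x ≠ z₂ → laplacian3 ψ x = 0) ∧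
    (∃ C R : ℝ, ∀ x : EuclideanSpace ℝ (Fin 3), R ≤ ‖x‖ → |ψ x| ≤ C / ‖x‖ ^ 2) ∧
    (∃ C ε : ℝ, 0 < ε ∧ ∀ x, x ≠ z₁ → ‖x - z₁‖ < ε →
      |ψ x - ((-1 / (4 * π)) / ‖x - z₁‖ + 4 * π * α * (-1 / (4 * π)))|
        ≤ C * ‖x - z₁‖) ∧
    (∃ C ε : ℝ, 0 < ε ∧ ∀ x, x ≠ z₂ → ‖x - z₂‖ < ε →
      |ψ x - ((1 / (4 * π)) / ‖x - z₂‖ + 4 * π * α * (1 / (4 * π)))|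
        ≤ C * ‖x - z₂‖) := by
  set c : ℝ := -(1 / (4 * π))
  obtain rfl : ψ = c • dipolePotential z₁ z₂ := by
    funext x
    simp only [hψ, one_div, Pi.smul_apply, smul_eq_mul, dipolePotential, c]
  have hs₀ : 0 < s := hs ▸ norm_pos_iff.2 (sub_ne_zero.2 hz)
  have hα' : 4 * π * α = -s⁻¹ := by rw [hα]; field_simp
  subst hs
  have hE : Module.finrank ℝ (EuclideanSpace ℝ (Fin 3)) = 3 := finrank_euclideanSpace_fin
  refine ⟨⟨(2 : ℝ) • z₁ - z₂, ?_⟩, (memLp_dipolePotential volume hE).const_smul c,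
    ⟨fun x hx ↦ ((contDiffAt_dipolePotential hx.1 hx.2).const_smul c).contDiffWithinAt,
      fun x h₁ h₂ ↦ ?_⟩,
    ⟨|c| * (4 * ‖z₁ - z₂‖), 2 * (‖z₁‖ + ‖z₂‖) + 1, fun x hx ↦ ?_⟩,
    ⟨|c| * (2 / ‖z₁ - z₂‖ ^ 2), ‖z₁ - z₂‖ / 2, by positivity, fun x _ hx ↦ ?_⟩,
    ⟨|c| * (2 / ‖z₁ - z₂‖ ^ 2), ‖z₁ - z₂‖ / 2, by positivity, fun x _ hx ↦ ?_⟩⟩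
  · rw [Pi.smul_apply, dipolePotential_two_smul_sub, smul_eq_mul]
    exact mul_ne_zero (by simp [c, pi_ne_zero]) (by positivity)
  · rw [laplacian3_eq_laplacian, laplacian_smul c (contDiffAt_dipolePotential h₁ h₂),
      laplacian_dipolePotential hE h₁ h₂, smul_zero]
  · rw [Pi.smul_apply, smul_eq_mul, abs_mul, mul_div_assoc]
    gcongr
    exact abs_dipolePotential_le (by linarith [norm_nonneg z₁, norm_nonneg z₂])
      (by linarith [norm_nonneg z₁, norm_nonneg z₂])
  · have hdiff : (c • dipolePotential z₁ z₂) x -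
          ((-1 / (4 * π)) / ‖x - z₁‖ + 4 * π * α * (-1 / (4 * π))) =
        c * (dipolePotential z₁ z₂ x - (‖x - z₁‖⁻¹ - ‖z₁ - z₂‖⁻¹)) := by
      rw [hα']
      simp only [Pi.smul_apply, smul_eq_mul, c]
      ring
    rw [hdiff, abs_mul, mul_assoc]
    gcongr
    exact abs_dipolePotential_sub_le hx
  · have hdiff : (c • dipolePotential z₁ z₂) x -
          ((1 / (4 * π)) / ‖x - z₂‖ + 4 * π * α * (1 / (4 * π))) =
        -c * (dipolePotential z₂ z₁ x - (‖x - z₂‖⁻¹ - ‖z₂ - z₁‖⁻¹)) := by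
      rw [hα', dipolePotential_swap, norm_sub_rev z₂ z₁]
      simp only [Pi.smul_apply, smul_eq_mul, c]
      ring
    rw [hdiff, abs_mul, abs_neg, mul_assoc, norm_sub_rev z₁ z₂]
    gcongr
    exact abs_dipolePotential_sub_le (by rwa [norm_sub_rev z₂ z₁])
end

section
/- Let z₁, …, zₙ ∈ ℝ³ be distinct and q ∈ ℝⁿ with ∑ⱼ qⱼ ≠ 0. Then ψ(x) = -(1/(4π)) ∑ⱼ qⱼ/|x - zⱼ| is not in L²(ℝ³). -/
/-!
Since `‖x‖ / ‖x - z‖ → 1` at infinity, `‖x‖ ψ(x) → -(∑ⱼ qⱼ) / (4π) ≠ 0`, so `|ψ(x)| ≥ c / ‖x‖`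
outside a large ball. In polar coordinates `∫_{‖x‖ > R} ‖x‖⁻² dx` is a multiple of
`∫_R^∞ r⁻² r² dr = ∞`, hence `ψ ∉ L²(ℝ³)`.
-/

open Real MeasureTheory Filter Topology Set Metric Module Bornology

theorem tendsto_norm_div_norm_sub_cobounded {E : Type*} [SeminormedAddCommGroup E] (z : E) :
    Tendsto (fun x => ‖x‖ / ‖x - z‖) (cobounded E) (𝓝 1) := by
  have hdist : Tendsto (fun x => ‖x - z‖) (cobounded E) atTop := by
    simpa only [dist_eq_norm] using tendsto_dist_right_cobounded_atTop z
  rw [tendsto_iff_norm_sub_tendsto_zero]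
  refine squeeze_zero' (.of_forall fun _ => norm_nonneg _) ?_
    ((tendsto_const_nhds (x := ‖z‖)).div_atTop hdist)
  filter_upwards [hdist.eventually_gt_atTop 0] with x hx
  rw [div_sub_one hx.ne', norm_div, norm_of_nonneg hx.le]
  gcongr
  simpa using abs_norm_sub_norm_le x (x - z)

theorem tendsto_norm_mul_sum_div_norm_sub {E ι : Type*} [SeminormedAddCommGroup E]
    (s : Finset ι) (q : ι → ℝ) (z : ι → E) :
    Tendsto (fun x => ‖x‖ * ∑ j ∈ s, q j / ‖x - z j‖) (cobounded E) (𝓝 (∑ j ∈ s, q j)) := by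
  simp only [Finset.mul_sum]
  refine tendsto_finsetSum s fun j _ => ?_
  simpa [mul_div_left_comm] using (tendsto_norm_div_norm_sub_cobounded (z j)).const_mul (q j)

section HaarMeasure

variable {E : Type*} [NormedAddCommGroup E] [NormedSpace ℝ E] [FiniteDimensional ℝ E]
  [Nontrivial E] [MeasurableSpace E] [BorelSpace E] (μ : Measure E) [μ.IsAddHaarMeasure]

theorem not_integrableOn_compl_closedBall_norm_rpow_neg {p R : ℝ} (hR : 0 < R)
    (hp : p ≤ finrank ℝ E) :
    ¬ IntegrableOn (fun x : E => ‖x‖ ^ (-p)) (closedBall 0 R)ᶜ μ := by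
  set d := finrank ℝ E
  have hd : 1 ≤ d := finrank_pos
  have hradial : (closedBall (0 : E) R)ᶜ.indicator (fun x => ‖x‖ ^ (-p)) =
      fun x => (Ioi R).indicator (fun r => r ^ (-p)) ‖x‖ := by
    ext x
    simp [indicator]
  have hpolar : (Ioi 0).indicator (fun y : ℝ => y ^ (d - 1) • (Ioi R).indicator (· ^ (-p)) y) =
      (Ioi R).indicator (fun y => y ^ ((d - 1 : ℝ) - p)) := by
    ext y
    by_cases hy : R < y
    · have hy0 : 0 < y := hR.trans hy
      simp [hy, hy0, sub_eq_add_neg, rpow_add hy0, ← rpow_natCast, Nat.cast_sub hd]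
    · simp [hy]
  rw [← integrable_indicator_iff measurableSet_closedBall.compl, hradial,
    integrable_fun_norm_addHaar μ, ← integrable_indicator_iff measurableSet_Ioi, hpolar,
    integrable_indicator_iff measurableSet_Ioi, integrableOn_Ioi_rpow_iff hR]
  linarith

variable {F : Type*} [NormedAddCommGroup F]

theorem not_memLp_of_eventually_div_norm_le {f : E → F} {p : ENNReal} (hp0 : p ≠ 0)
    (hp : p ≠ ⊤) (hpd : p.toReal ≤ finrank ℝ E) {c : ℝ} (hc : 0 < c)
    (hf : ∀ᶠ x in cobounded E, c / ‖x‖ ≤ ‖f x‖) :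
    ¬ MemLp f p μ := by
  intro hLp
  obtain ⟨r, -, hr⟩ := (hasBasis_cobounded_compl_closedBall (0 : E)).eventually_iff.1 hf
  set R := max r 1
  have hR : 0 < R := lt_max_of_lt_right one_pos
  have hsub : (closedBall (0 : E) R)ᶜ ⊆ (closedBall 0 r)ᶜ :=
    compl_subset_compl.2 (closedBall_subset_closedBall (le_max_left _ _))
  refine not_integrableOn_compl_closedBall_norm_rpow_neg μ hR hpd ?_
  refine (((hLp.integrable_norm_rpow hp0 hp).const_mul (c ^ (-p.toReal))).integrableOn).mono'
    (measurable_norm.pow_const _).aestronglyMeasurable ?_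
  filter_upwards [ae_restrict_mem measurableSet_closedBall.compl] with x hx
  have hx0 : 0 < ‖x‖ := hR.trans (by simpa using hx)
  calc ‖‖x‖ ^ (-p.toReal)‖ = c ^ (-p.toReal) * (c / ‖x‖) ^ p.toReal := by
        rw [norm_of_nonneg (by positivity), div_rpow hc.le hx0.le, rpow_neg hc.le,
          rpow_neg hx0.le]
        field_simp
    _ ≤ c ^ (-p.toReal) * ‖f x‖ ^ p.toReal := by
        gcongr
        exact hr (hsub hx)

theorem not_memLp_of_tendsto_norm_smul [NormedSpace ℝ F] {f : E → F} {p : ENNReal}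
    (hp0 : p ≠ 0) (hp : p ≠ ⊤) (hpd : p.toReal ≤ finrank ℝ E) {a : F} (ha : a ≠ 0)
    (hf : Tendsto (fun x => ‖x‖ • f x) (cobounded E) (𝓝 a)) :
    ¬ MemLp f p μ := by
  have hbound : ∀ᶠ x in cobounded E, ‖a‖ / 2 < ‖x‖ * ‖f x‖ := by
    simpa [norm_smul] using hf.norm.eventually_const_lt (half_lt_self (norm_pos_iff.2 ha))
  refine not_memLp_of_eventually_div_norm_le μ hp0 hp hpd (half_pos (norm_pos_iff.2 ha)) ?_
  filter_upwards [hbound, eventually_cobounded_le_norm 1] with x hx hx1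
  rw [div_le_iff₀' (one_pos.trans_le hx1)]
  exact hx.le

end HaarMeasure

theorem stmt19_general (n : ℕ) (z : Fin n → EuclideanSpace ℝ (Fin 3)) (q : Fin n → ℝ)
    (hq : ∑ j, q j ≠ 0) :
    ¬ MemLp (fun x : EuclideanSpace ℝ (Fin 3) => -(1 / (4 * π)) * ∑ j, q j / ‖x - z j‖)
      2 (volume : Measure (EuclideanSpace ℝ (Fin 3))) := by
  refine not_memLp_of_tendsto_norm_smul volume two_ne_zero ENNReal.ofNat_ne_top (by norm_num)
    (a := -(1 / (4 * π)) * ∑ j, q j) (by simp [hq, pi_ne_zero]) ?_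
  simpa [smul_eq_mul, mul_left_comm] using
    (tendsto_norm_mul_sum_div_norm_sub Finset.univ q z).const_mul (-(1 / (4 * π)))

/-- if the total charge does not vanish, the sum of Newtonian potentials
is not in L²(ℝ³). -/
theorem stmt19 (n : ℕ) (z : Fin n → EuclideanSpace ℝ (Fin 3)) (q : Fin n → ℝ)
    (hz : Function.Injective z) (hq : ∑ j, q j ≠ 0) :
    ¬ MemLp (fun x : EuclideanSpace ℝ (Fin 3) => -(1 / (4 * π)) * ∑ j, q j / ‖x - z j‖)
      2 (volume : Measure (EuclideanSpace ℝ (Fin 3))) :=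
  stmt19_general n z q hq
end
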